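/- Let M ∈ ℝ^{3×3} be symmetric, R ∈ SO(3), and Ω ∈ ℝ³. Then vex(P_a(M R [Ω]_×)) = ½ (Tr(M R)·I₃ − Rᵀ M) Ω. In particular, if R(t) is a differentiable curve in SO(3) with Ṙ = R[Ω]_×, then (d/dt) vex(P_a(M R)) = ½ (Tr(M R)·I₃ − Rᵀ M) Ω. -/

import Mathlib

open Matrix

attribute [local instance] Matrix.frobeniusNormedAddCommGroup Matrix.frobeniusNormedSpace

/-- The hat map `[y]ₓ`: the 3×3 skew-symmetric matrix with `[y]ₓ x = y × x`. -/
def hat (y : Fin 3 → ℝ) : Matrix (Fin 3) (Fin 3) ℝ :=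
  !![0, -y 2, y 1; y 2, 0, -y 0; -y 1, y 0, 0]

/-- `vex(𝒫ₐ(A)) = ½ [A₃₂ − A₂₃, A₁₃ − A₃₁, A₂₁ − A₁₂]ᵀ`. -/
noncomputable def vexPa (A : Matrix (Fin 3) (Fin 3) ℝ) : Fin 3 → ℝ :=
  ![(A 2 1 - A 1 2) / 2, (A 0 2 - A 2 0) / 2, (A 1 0 - A 0 1) / 2]

/-! The first claim holds for every matrix `A` in place of `M R`: the identity
`A [Ω]ₓ + [Ω]ₓ Aᵀ = [(Tr A · I₃ − Aᵀ) Ω]ₓ` is checked entrywise, and symmetry of `M` only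
enters through `(M R)ᵀ = Rᵀ M`. The second claim follows because `A ↦ vex(𝒫ₐ(M A))` is
linear, so it commutes with differentiation, and `Ṙ = R [Ω]ₓ` reduces it to the first. -/

theorem vexPa_mul_hat (A : Matrix (Fin 3) (Fin 3) ℝ) (Ω : Fin 3 → ℝ) :
    vexPa (A * hat Ω) = (2 : ℝ)⁻¹ • (A.trace • (1 : Matrix (Fin 3) (Fin 3) ℝ) - Aᵀ) *ᵥ Ω := by
  funext i
  fin_cases i <;>
    simp [vexPa, hat, mul_apply, mulVec, dotProduct, trace, one_apply, Fin.sum_univ_succ] <;>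
    ring

noncomputable def vexPaLinear : Matrix (Fin 3) (Fin 3) ℝ →ₗ[ℝ] (Fin 3 → ℝ) where
  toFun := vexPa
  map_add' A B := by
    funext i
    fin_cases i <;> simp [vexPa] <;> ring
  map_smul' c A := by
    funext i
    fin_cases i <;> simp [vexPa] <;> ring

theorem HasDerivAt.vexPa_mul_left (M : Matrix (Fin 3) (Fin 3) ℝ)
    {f : ℝ → Matrix (Fin 3) (Fin 3) ℝ} {f' : Matrix (Fin 3) (Fin 3) ℝ} {t : ℝ}
    (hf : HasDerivAt f f' t) : HasDerivAt (fun s => vexPa (M * f s)) (vexPa (M * f')) t :=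
  (vexPaLinear.comp (LinearMap.mulLeft ℝ M)).toContinuousLinearMap.hasFDerivAt.comp_hasDerivAt t hf

theorem vexPa_deriv_general (M R : Matrix (Fin 3) (Fin 3) ℝ) (hM : Mᵀ = M)
    (Ω : Fin 3 → ℝ)
    (Rc : ℝ → Matrix (Fin 3) (Fin 3) ℝ)
    (hRcDeriv : ∀ t, HasDerivAt Rc (Rc t * hat Ω) t) :
    vexPa (M * R * hat Ω) =
        (2 : ℝ)⁻¹ • ((M * R).trace • (1 : Matrix (Fin 3) (Fin 3) ℝ) - Rᵀ * M).mulVec Ω ∧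
      ∀ t, HasDerivAt (fun s => vexPa (M * Rc s))
        ((2 : ℝ)⁻¹ •
          ((M * Rc t).trace • (1 : Matrix (Fin 3) (Fin 3) ℝ) - (Rc t)ᵀ * M).mulVec Ω) t := by
  have hsym (A : Matrix (Fin 3) (Fin 3) ℝ) :
      vexPa (M * A * hat Ω) =
        (2 : ℝ)⁻¹ • ((M * A).trace • (1 : Matrix (Fin 3) (Fin 3) ℝ) - Aᵀ * M) *ᵥ Ω := by
    rw [vexPa_mul_hat, transpose_mul, hM]
  refine ⟨hsym R, fun t => ?_⟩
  rw [← hsym, mul_assoc]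
  exact (hRcDeriv t).vexPa_mul_left M

/-- for symmetric `M`, `R ∈ SO(3)` and `Ω ∈ ℝ³`,
`vex(𝒫ₐ(M R [Ω]ₓ)) = ½ (Tr(M R)·I₃ − Rᵀ M) Ω`; in particular, along a
differentiable curve `Rc` on SO(3) with `Ṙc = Rc [Ω]ₓ`,
`(d/dt) vex(𝒫ₐ(M Rc)) = ½ (Tr(M Rc)·I₃ − Rcᵀ M) Ω`. -/
theorem vexPa_deriv (M R : Matrix (Fin 3) (Fin 3) ℝ) (hM : Mᵀ = M)
    (hR : Rᵀ * R = 1) (hRdet : R.det = 1) (Ω : Fin 3 → ℝ)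
    (Rc : ℝ → Matrix (Fin 3) (Fin 3) ℝ)
    (hRc : ∀ t, (Rc t)ᵀ * Rc t = 1 ∧ (Rc t).det = 1)
    (hRcDeriv : ∀ t, HasDerivAt Rc (Rc t * hat Ω) t) :
    vexPa (M * R * hat Ω) =
        (2 : ℝ)⁻¹ • ((M * R).trace • (1 : Matrix (Fin 3) (Fin 3) ℝ) - Rᵀ * M).mulVec Ω ∧
      ∀ t, HasDerivAt (fun s => vexPa (M * Rc s))
        ((2 : ℝ)⁻¹ •
          ((M * Rc t).trace • (1 : Matrix (Fin 3) (Fin 3) ℝ) - (Rc t)ᵀ * M).mulVec Ω) t :=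
  vexPa_deriv_general M R hM Ω Rc hRcDeriv
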